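/- arXiv:2605.16974 — 4 statements merged into one kernel-verified Lean document; each statement's English description precedes it below -/
import Mathlib

section
/- Let p, a ∈ ℤ and n ≥ 2, with Σ(x) := 1 − (n+1)x and ∘ as usual. There exists r ∈ ℤ with a = p ∘ r if and only if Σ(p) divides Σ(a) in ℤ. Moreover, in that case the quotient Σ(a)/Σ(p) is congruent to 1 modulo n+1. -/
theorem norm_divisibility (n : ℕ) (hn : 2 ≤ n) (p a : ℤ) :
    ((∃ r : ℤ, a = p + r - ((n : ℤ) + 1) * p * r)
      ↔ (1 - ((n : ℤ) + 1) * p) ∣ (1 - ((n : ℤ) + 1) * a)) ∧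
    (∀ k : ℤ, 1 - ((n : ℤ) + 1) * a = (1 - ((n : ℤ) + 1) * p) * k →
      k ≡ 1 [ZMOD ((n : ℤ) + 1)]) := by
  set m : ℤ := (n : ℤ) + 1 with hm
  have hm0 : m ≠ 0 := by positivity
  have key : ∀ k : ℤ, 1 - m * a = (1 - m * p) * k → m ∣ (1 - k) := by
    intro k hk
    exact ⟨a - p * k, by linear_combination hk⟩
  constructor
  · constructor
    · rintro ⟨r, rfl⟩
      exact ⟨1 - m * r, by ring⟩
    · rintro ⟨k, hk⟩
      obtain ⟨r, hr⟩ := key k hk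
      refine ⟨r, ?_⟩
      have h2 : m * a = m * (p + r - m * p * r) := by
        linear_combination -hk + (1 - m * p) * hr
      exact mul_left_cancel₀ hm0 h2
  · intro k hk
    exact Int.modEq_iff_dvd.mpr (key k hk)
end

section
/- Let R be a commutative ring, 𝔞 ⊆ R an ideal, and J(𝔞) := {x ∈ R : 1 − (n+1)x ∈ 𝔞}. Then J(𝔞) is an n-ary elliptic ideal: (I1) if x₁, …, xₙ ∈ J(𝔞) then 1 − (x₁ + ⋯ + xₙ) ∈ J(𝔞); (I2) if x ∈ J(𝔞) and r ∈ R then x + r − (n+1)xr ∈ J(𝔞). -/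
theorem J_is_ideal (R : Type*) [CommRing R] (n : ℕ) (hn : 2 ≤ n) (I : Ideal R) :
    (∀ x : Fin n → R, (∀ i, 1 - ((n : R) + 1) * x i ∈ I) →
      1 - ((n : R) + 1) * (1 - ∑ i, x i) ∈ I) ∧
    (∀ x r : R, 1 - ((n : R) + 1) * x ∈ I →
      1 - ((n : R) + 1) * (x + r - ((n : R) + 1) * x * r) ∈ I) := by
  constructor
  · intro x hx
    have key : 1 - ((n : R) + 1) * (1 - ∑ i, x i) = -∑ i, (1 - ((n : R) + 1) * x i) := by
      rw [Finset.sum_sub_distrib, Finset.sum_const, Finset.card_univ, Fintype.card_fin,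
        ← Finset.mul_sum]
      push_cast
      ring
    rw [key]
    exact neg_mem (Ideal.sum_mem I fun i _ => hx i)
  · intro x r hx
    have key : 1 - ((n : R) + 1) * (x + r - ((n : R) + 1) * x * r) =
        (1 - ((n : R) + 1) * x) * (1 - ((n : R) + 1) * r) := by ring
    rw [key]
    exact I.mul_mem_right _ hx
end

section
/- Let R be a commutative ring and 𝔭 ⊊ R a prime ideal. Then J(𝔭) = {x : 1 − (n+1)x ∈ 𝔭} is a ∘-prime ideal of nEll(R): it is a proper n-ary ideal, and x ∘ y ∈ J(𝔭) implies x ∈ J(𝔭) or y ∈ J(𝔭), where x ∘ y = x + y − (n+1)xy. -/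
theorem J_prime (R : Type*) [CommRing R] (n : ℕ) (hn : 2 ≤ n)
    (P : Ideal R) [P.IsPrime] :
    (0 : R) ∉ {x : R | 1 - ((n : R) + 1) * x ∈ P} ∧
    (∀ x y : R, 1 - ((n : R) + 1) * (x + y - ((n : R) + 1) * x * y) ∈ P →
      1 - ((n : R) + 1) * x ∈ P ∨ 1 - ((n : R) + 1) * y ∈ P) := by
  constructor
  · simpa using (Ideal.IsPrime.ne_top ‹_›) ∘ (Ideal.eq_top_iff_one P).mpr
  · intro x y h
    have key : 1 - ((n : R) + 1) * (x + y - ((n : R) + 1) * x * y)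
        = (1 - ((n : R) + 1) * x) * (1 - ((n : R) + 1) * y) := by ring
    rw [key] at h
    exact (Ideal.IsPrime.mem_or_mem ‹_› h)
end

section
/- For n ≥ 2, there are infinitely many ∘-primes in nEll(ℤ) if and only if there are infinitely many rational primes q with q ≡ ±1 (mod n+1). Concretely: the set {p ∈ ℤ : |1 − (n+1)p| is prime} is infinite if and only if the set of primes congruent to 1 or −1 modulo n+1 is infinite. -/
theorem main_theorem (n : ℕ) (hn : 2 ≤ n) :
    {p : ℤ | Nat.Prime (1 - ((n : ℤ) + 1) * p).natAbs}.Infinite ↔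
    {q : ℕ | q.Prime ∧ ((q : ℤ) ≡ 1 [ZMOD ((n : ℤ) + 1)] ∨
      (q : ℤ) ≡ -1 [ZMOD ((n : ℤ) + 1)])}.Infinite := by
  set m : ℤ := (n : ℤ) + 1 with hm
  have hm3 : (3 : ℤ) ≤ m := by
    have : (2:ℤ) ≤ (n:ℤ) := by exact_mod_cast hn
    omega
  have hm0 : m ≠ 0 := by omega
  set S : Set ℤ := {p : ℤ | Nat.Prime (1 - m * p).natAbs} with hS
  set T : Set ℕ := {q : ℕ | q.Prime ∧ ((q : ℤ) ≡ 1 [ZMOD m] ∨ (q : ℤ) ≡ -1 [ZMOD m])} with hT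
  constructor
  · intro hSinf
    set f : ℤ → ℕ := fun p => (1 - m * p).natAbs with hf
    have hmem : ∀ p ∈ S, f p ∈ T := by
      intro p hp
      refine ⟨hp, ?_⟩
      have h1 : (1 - m * p) ≡ 1 [ZMOD m] := Int.modEq_iff_dvd.mpr (by
        have h2 : 1 - (1 - m*p) = m * p := by ring
        rw [h2]; exact dvd_mul_right _ _)
      rcases Int.natAbs_eq (1 - m * p) with h | h
      · left
        show ((((1 - m * p).natAbs : ℤ))) ≡ 1 [ZMOD m]
        rw [← h]; exact h1
      · right
        show ((((1 - m * p).natAbs : ℤ))) ≡ -1 [ZMOD m]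
        have heq : (((1 - m * p).natAbs : ℤ)) = -(1 - m * p) := by omega
        rw [heq]
        exact h1.neg
    have hsplit : S = (S ∩ {p : ℤ | p ≤ 0}) ∪ (S ∩ {p : ℤ | 0 < p}) := by
      ext p; simp only [Set.mem_union, Set.mem_inter_iff, Set.mem_setOf_eq]
      constructor
      · intro h; by_cases hp : p ≤ 0
        · exact Or.inl ⟨h, hp⟩
        · exact Or.inr ⟨h, by omega⟩
      · rintro (⟨h, _⟩ | ⟨h, _⟩) <;> exact h
    rw [hsplit] at hSinf
    rcases Set.infinite_union.mp hSinf with hA | hA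
    · have hinj : Set.InjOn f (S ∩ {p : ℤ | p ≤ 0}) := by
        intro p1 ⟨_, h1⟩ p2 ⟨_, h2⟩ hfeq
        have h1' : p1 ≤ 0 := h1
        have h2' : p2 ≤ 0 := h2
        have hfeq' : (1 - m * p1).natAbs = (1 - m * p2).natAbs := hfeq
        have hpos1 : 0 ≤ 1 - m * p1 := by nlinarith
        have hpos2 : 0 ≤ 1 - m * p2 := by nlinarith
        have heq : m * p1 = m * p2 := by omega
        exact mul_left_cancel₀ hm0 heq
      exact ((hA.image hinj).mono (by
        rintro q ⟨p, ⟨hp, _⟩, rfl⟩; exact hmem p hp))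
    · have hinj : Set.InjOn f (S ∩ {p : ℤ | 0 < p}) := by
        intro p1 ⟨_, h1⟩ p2 ⟨_, h2⟩ hfeq
        have h1' : 0 < p1 := h1
        have h2' : 0 < p2 := h2
        have hfeq' : (1 - m * p1).natAbs = (1 - m * p2).natAbs := hfeq
        have hneg1 : 1 - m * p1 ≤ 0 := by nlinarith
        have hneg2 : 1 - m * p2 ≤ 0 := by nlinarith
        have heq : m * p1 = m * p2 := by omega
        exact mul_left_cancel₀ hm0 heq
      exact ((hA.image hinj).mono (by
        rintro q ⟨p, ⟨hp, _⟩, rfl⟩; exact hmem p hp))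
  · intro hTinf
    set g : ℕ → ℤ := fun q => if (q : ℤ) ≡ 1 [ZMOD m] then (1 - q) / m else (1 + q) / m
      with hg
    have key : ∀ q ∈ T, (1 - m * g q).natAbs = q := by
      rintro q ⟨hq, hmod⟩
      by_cases h : (q : ℤ) ≡ 1 [ZMOD m]
      · have hd : m ∣ 1 - (q:ℤ) := Int.modEq_iff_dvd.mp h
        show (1 - m * (if (q : ℤ) ≡ 1 [ZMOD m] then (1 - (q:ℤ)) / m else (1 + q) / m)).natAbs = q
        rw [if_pos h, Int.mul_ediv_cancel' hd]
        simp
      · have hmod' : (q : ℤ) ≡ -1 [ZMOD m] := hmod.resolve_left h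
        have hd0 : m ∣ -1 - (q:ℤ) := Int.modEq_iff_dvd.mp hmod'
        have hd : m ∣ 1 + (q:ℤ) := by
          have h3 : m ∣ -(1 + (q:ℤ)) := by
            have heq : -(1 + (q:ℤ)) = -1 - q := by ring
            rw [heq]; exact hd0
          exact (dvd_neg).mp h3
        show (1 - m * (if (q : ℤ) ≡ 1 [ZMOD m] then (1 - (q:ℤ)) / m else (1 + q) / m)).natAbs = q
        rw [if_neg h, Int.mul_ediv_cancel' hd]
        simp
    have hinj : Set.InjOn g T := by
      intro q1 h1 q2 h2 hgeq
      have hk := key q1 h1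
      rw [hgeq, key q2 h2] at hk
      exact hk.symm
    exact ((hTinf.image hinj).mono (by
      rintro p ⟨q, hq, rfl⟩
      show Nat.Prime (1 - m * g q).natAbs
      rw [key q hq]
      exact hq.1))
end
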